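/- Let (R, m) be an Artinian local ring and M a finitely generated R-module with no nonzero free direct summand. Then the image of any R-linear map from M to a free R-module F is contained in mF, and consequently the positive-degree part of the Rees algebra R(M) is a nilpotent ideal. -/

import Mathlib

noncomputable section

open TensorAlgebra in
/-- The relation defining the symmetric algebra as a quotient of the tensor algebra. -/
inductive SymRel (R : Type*) [CommRing R] (M : Type*) [AddCommGroup M] [Module R M] :
    TensorAlgebra R M → TensorAlgebra R M → Prop
  | mul_comm (x y : M) : SymRel R M (ι R x * ι R y) (ι R y * ι R x)

/-- The symmetric algebra of a module. -/
abbrev SymmAlg (R : Type*) [CommRing R] (M : Type*) [AddCommGroup M] [Module R M] :=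
  RingQuot (SymRel R M)

variable (R : Type*) [CommRing R] {M N : Type*} [AddCommGroup M] [Module R M]
  [AddCommGroup N] [Module R N]

/-- The canonical inclusion of `M` in degree one of its symmetric algebra. -/
def SymmAlg.ι : M →ₗ[R] SymmAlg R M :=
  (RingQuot.mkAlgHom R (SymRel R M)).toLinearMap ∘ₗ TensorAlgebra.ι R

instance : CommRing (SymmAlg R M) :=
  { (inferInstance : Ring (SymmAlg R M)) with
    mul_comm := by
      have key : ∀ x y : TensorAlgebra R M,
          RingQuot.mkAlgHom R (SymRel R M) x * RingQuot.mkAlgHom R (SymRel R M) y =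
          RingQuot.mkAlgHom R (SymRel R M) y * RingQuot.mkAlgHom R (SymRel R M) x := by
        intro x y
        induction x using TensorAlgebra.induction with
        | algebraMap r => simp [Algebra.commutes]
        | ι m =>
          induction y using TensorAlgebra.induction with
          | algebraMap r => simp [Algebra.commutes]
          | ι m' =>
            have h := RingQuot.mkAlgHom_rel R (SymRel.mul_comm (R := R) m m')
            simpa only [map_mul] using h
          | add a b ha hb => simp only [map_add, add_mul, mul_add, ha, hb]
          | mul a b ha hb =>
            simp only [map_mul, ← mul_assoc, ha]
            rw [mul_assoc _ _ (RingQuot.mkAlgHom R (SymRel R M) b), hb, mul_assoc]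
        | add a b ha hb => simp only [map_add, add_mul, mul_add, ha, hb]
        | mul a b ha hb =>
          simp only [map_mul, mul_assoc, hb]
          rw [← mul_assoc, ha, mul_assoc]
      intro a b
      obtain ⟨x, rfl⟩ := RingQuot.mkAlgHom_surjective R (SymRel R M) a
      obtain ⟨y, rfl⟩ := RingQuot.mkAlgHom_surjective R (SymRel R M) b
      exact key x y }

theorem SymmAlg.ι_mul_comm (x y : M) :
    SymmAlg.ι R x * SymmAlg.ι R y = SymmAlg.ι R y * SymmAlg.ι R x := mul_comm _ _

/-- Functoriality of the symmetric algebra. -/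
def SymmAlg.map (f : M →ₗ[R] N) : SymmAlg R M →ₐ[R] SymmAlg R N :=
  RingQuot.liftAlgHom R ⟨TensorAlgebra.lift R ((SymmAlg.ι R).comp f), by
    intro x y h
    cases h with
    | mul_comm a b => simp [mul_comm]⟩

universe w
/-- A map to a free module is versal if every map to a free module factors through it. -/
def IsVersal {R : Type*} [CommRing R] {M F : Type*} [AddCommGroup M] [Module R M]
    [AddCommGroup F] [Module R F] (f : M →ₗ[R] F) : Prop :=
  ∀ (G : Type w) [AddCommGroup G] [Module R G] [Module.Free R G] (g : M →ₗ[R] G),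
    ∃ h : F →ₗ[R] G, h ∘ₗ f = g

/-- `M` has no (nonzero) free direct summand. -/
def HasNoFreeSummand (R : Type*) [CommRing R] (M : Type*) [AddCommGroup M] [Module R M] :
    Prop :=
  ¬ ∃ (N N' : Submodule R M), IsCompl N N' ∧ Nonempty (N ≃ₗ[R] R)

set_option maxHeartbeats 1000000
set_option synthInstance.maxHeartbeats 400000

/-!
A linear form `M → R` taking a unit value splits off a copy of `R`, so over a local ring every
coordinate of a map from `M` to a free module takes values in `m`. Hence the degree one
generators `ι (f m)` of the Rees algebra lie in `m · Sym F`, which is nilpotent because `m` is;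
and the Rees algebra embeds in `Sym F`.
-/

theorem SymmAlg.map_ι (f : M →ₗ[R] N) (m : M) :
    SymmAlg.map R f (SymmAlg.ι R m) = SymmAlg.ι R (f m) := by
  simp [SymmAlg.map, SymmAlg.ι, RingQuot.liftAlgHom_mkAlgHom_apply]

theorem Module.Basis.mem_ideal_smul_top_of_repr_mem {R F ι : Type*} [CommRing R]
    [AddCommGroup F] [Module R F] (b : Module.Basis ι R F) {I : Ideal R} {x : F}
    (hx : ∀ i, b.repr x i ∈ I) : x ∈ I • (⊤ : Submodule R F) := by
  rw [← b.linearCombination_repr x, Finsupp.linearCombination_apply, Finsupp.sum]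
  exact Submodule.sum_mem _ fun i _ => Submodule.smul_mem_smul (hx i) trivial

theorem LinearMap.apply_mem_map_algebraMap_of_mem_smul_top {R F A : Type*} [CommRing R]
    [AddCommGroup F] [Module R F] [CommRing A] [Algebra R A] (ψ : F →ₗ[R] A) {I : Ideal R}
    {x : F} (hx : x ∈ I • (⊤ : Submodule R F)) : ψ x ∈ I.map (algebraMap R A) := by
  have hψx := Submodule.mem_map_of_mem (f := ψ) hx
  rw [Submodule.map_smul''] at hψx
  rw [← Submodule.restrictScalars_mem R, ← Ideal.smul_top_eq_map]
  exact Submodule.smul_mono le_rfl le_top hψx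

theorem Ideal.isNilpotent_of_injective_of_map_le {A B : Type*} [CommRing A] [CommRing B]
    {f : A →+* B} (hf : Function.Injective f) {I : Ideal A} {J : Ideal B}
    (hIJ : I.map f ≤ J) (hJ : IsNilpotent J) : IsNilpotent I := by
  obtain ⟨n, hn⟩ := hJ
  refine ⟨n, (Ideal.map_eq_bot_iff_of_injective hf).1 (le_bot_iff.1 ?_)⟩
  calc (I ^ n).map f = I.map f ^ n := Ideal.map_pow f I n
    _ ≤ J ^ n := Ideal.pow_right_mono hIJ n
    _ = ⊥ := hn

namespace HasNoFreeSummand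

variable {R M : Type*} [CommRing R] [AddCommGroup M] [Module R M]

theorem apply_ne_one (hM : HasNoFreeSummand R M) (g : M →ₗ[R] R) (x : M) : g x ≠ 1 := by
  intro hx
  set s := LinearMap.toSpanSingleton R M x
  have hgs : ∀ c, g (s c) = c := fun c => by simp [s, hx]
  have hs : Function.Injective s := Function.LeftInverse.injective hgs
  let r : M →ₗ[R] LinearMap.range s := s.rangeRestrict ∘ₗ g
  have hr : ∀ y : LinearMap.range s, r y = y := by
    rintro ⟨_, c, rfl⟩
    ext
    simp [r, hgs]
  exact hM ⟨_, _, LinearMap.isCompl_of_proj hr, ⟨(LinearEquiv.ofInjective s hs).symm⟩⟩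

theorem range_le_maximalIdeal [IsLocalRing R] (hM : HasNoFreeSummand R M) (g : M →ₗ[R] R) :
    LinearMap.range g ≤ IsLocalRing.maximalIdeal R := by
  rintro _ ⟨x, rfl⟩
  by_contra hx
  obtain ⟨u, hu⟩ := not_not.1 (mt (IsLocalRing.mem_maximalIdeal _).2 hx)
  refine hM.apply_ne_one g (↑u⁻¹ • x) ?_
  rw [Units.smul_def, map_smul, ← hu, smul_eq_mul, Units.inv_mul]

theorem range_le_maximalIdeal_smul_top [IsLocalRing R] (hM : HasNoFreeSummand R M)
    {F : Type*} [AddCommGroup F] [Module R F] [Module.Free R F] (φ : M →ₗ[R] F) :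
    LinearMap.range φ ≤ IsLocalRing.maximalIdeal R • (⊤ : Submodule R F) := by
  rintro _ ⟨x, rfl⟩
  let b := Module.Free.chooseBasis R F
  exact b.mem_ideal_smul_top_of_repr_mem fun i =>
    hM.range_le_maximalIdeal (b.coord i ∘ₗ φ) ⟨x, rfl⟩

end HasNoFreeSummand

theorem range_le_smul_and_posPart_nilpotent_general {R : Type*} [CommRing R] [IsArtinianRing R]
    [IsLocalRing R] {M : Type*} [AddCommGroup M] [Module R M]
    (hM : HasNoFreeSummand R M) :
    (∀ (F : Type*) [AddCommGroup F] [Module R F] [Module.Free R F] (φ : M →ₗ[R] F),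
        LinearMap.range φ ≤ (IsLocalRing.maximalIdeal R) • (⊤ : Submodule R F)) ∧
      ∀ (F : Type*) [AddCommGroup F] [Module R F] [Module.Free R F] (f : M →ₗ[R] F),
        IsVersal f →
        IsNilpotent (Ideal.span (Set.range fun m : M =>
          (⟨SymmAlg.map R f (SymmAlg.ι R m), ⟨SymmAlg.ι R m, rfl⟩⟩ :
            ↥(SymmAlg.map R f).range))) := by
  refine ⟨fun F _ _ _ φ => hM.range_le_maximalIdeal_smul_top φ, fun F _ _ _ f _ => ?_⟩
  have hm : IsNilpotent (IsLocalRing.maximalIdeal R) :=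
    IsLocalRing.jacobson_eq_maximalIdeal (⊥ : Ideal R) bot_ne_top ▸
      IsArtinianRing.isNilpotent_jacobson_bot
  refine Ideal.isNilpotent_of_injective_of_map_le (f := (SymmAlg.map R f).range.val)
    Subtype.val_injective ?_ (hm.map (Ideal.mapHom (algebraMap R (SymmAlg R F))))
  rw [Ideal.map_span, Ideal.span_le]
  rintro _ ⟨_, ⟨m, rfl⟩, rfl⟩
  rw [SetLike.mem_coe, Ideal.mapHom_apply]
  change SymmAlg.map R f (SymmAlg.ι R m) ∈ _
  rw [SymmAlg.map_ι]
  exact (SymmAlg.ι R).apply_mem_map_algebraMap_of_mem_smul_top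
    (hM.range_le_maximalIdeal_smul_top f ⟨m, rfl⟩)

/-- Over an Artinian local ring, if `M` has no free direct summand then the image of every map
from `M` to a free module `F` lies in `m•F`, and the positive-degree part of the Rees algebra
of `M` (the ideal generated by the degree one part of the image of `Sym` of a versal map) is
nilpotent. -/
theorem range_le_smul_and_posPart_nilpotent {R : Type*} [CommRing R] [IsArtinianRing R]
    [IsLocalRing R] {M : Type*} [AddCommGroup M] [Module R M] [Module.Finite R M]
    (hM : HasNoFreeSummand R M) :
    (∀ (F : Type*) [AddCommGroup F] [Module R F] [Module.Free R F] (φ : M →ₗ[R] F),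
        LinearMap.range φ ≤ (IsLocalRing.maximalIdeal R) • (⊤ : Submodule R F)) ∧
      ∀ (F : Type*) [AddCommGroup F] [Module R F] [Module.Free R F] (f : M →ₗ[R] F),
        IsVersal f →
        IsNilpotent (Ideal.span (Set.range fun m : M =>
          (⟨SymmAlg.map R f (SymmAlg.ι R m), ⟨SymmAlg.ι R m, rfl⟩⟩ :
            ↥(SymmAlg.map R f).range))) :=
  range_le_smul_and_posPart_nilpotent_general hM
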